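/- Let H be a compactly generated, locally compact, nilpotent group, and let 𝓛 be a collection of closed subgroups of H such that the subgroup generated by the union of the members of 𝓛 is dense in H. Then, for some n, there exist L₁, …, Lₙ ∈ 𝓛 and a compact subset C of H such that C L₁ L₂ ⋯ Lₙ = H. -/

import Mathlib

open scoped Pointwise

/-- A `(Q, ε)`-invariant vector for a representation `π`. -/
def IsInvVec {G : Type*} [Group G] {𝓗 : Type*} [NormedAddCommGroup 𝓗]
    [InnerProductSpace ℂ 𝓗] (π : G →* (𝓗 ≃ₗᵢ[ℂ] 𝓗)) (Q : Set G) (ε : ℝ) (ξ : 𝓗) : Prop :=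
  ∀ g ∈ Q, ‖π g ξ - ξ‖ ≤ ε * ‖ξ‖

/-- A unitary representation: a homomorphism into the unitary group of a complex Hilbert
space that is continuous in the strong operator topology. -/
def IsUnitaryRep {G : Type*} [Group G] [TopologicalSpace G] {𝓗 : Type*}
    [NormedAddCommGroup 𝓗] [InnerProductSpace ℂ 𝓗] (π : G →* (𝓗 ≃ₗᵢ[ℂ] 𝓗)) : Prop :=
  ∀ ξ : 𝓗, Continuous fun g => π g ξ

/-- Relative Property (T) for a pair `(G, M)`, where `M` is a subset of `G`: every unitary
representation of `G` with almost-invariant vectors has a nonzero `M`-invariant vector. -/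
def RelPropT (G : Type*) [Group G] [TopologicalSpace G] (M : Set G) : Prop :=
  ∀ (𝓗 : Type) (_ : NormedAddCommGroup 𝓗) (_ : InnerProductSpace ℂ 𝓗)
    (_ : CompleteSpace 𝓗) (_ : SecondCountableTopology 𝓗)
    (π : G →* (𝓗 ≃ₗᵢ[ℂ] 𝓗)), IsUnitaryRep π →
    (∀ Q : Set G, IsCompact Q → ∀ ε : ℝ, 0 < ε → ∃ ξ : 𝓗, ξ ≠ 0 ∧ IsInvVec π Q ε ξ) →
    ∃ ξ : 𝓗, ξ ≠ 0 ∧ ∀ m ∈ M, π m ξ = ξ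

/-- Relative Property (T) for a triple `(G, H, M)`: every unitary representation of `G` whose
restriction to `H` has almost-invariant vectors has a nonzero `M`-invariant vector. -/
def RelPropT₃ (G : Type*) [Group G] [TopologicalSpace G] (H M : Set G) : Prop :=
  ∀ (𝓗 : Type) (_ : NormedAddCommGroup 𝓗) (_ : InnerProductSpace ℂ 𝓗)
    (_ : CompleteSpace 𝓗) (_ : SecondCountableTopology 𝓗)
    (π : G →* (𝓗 ≃ₗᵢ[ℂ] 𝓗)), IsUnitaryRep π →
    (∀ Q : Set G, Q ⊆ H → IsCompact Q → ∀ ε : ℝ, 0 < ε → ∃ ξ : 𝓗, ξ ≠ 0 ∧ IsInvVec π Q ε ξ) →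
    ∃ ξ : 𝓗, ξ ≠ 0 ∧ ∀ m ∈ M, π m ξ = ξ

/-- Relative Property (T) with approximation for a triple `(G, H, M)`. -/
def RelPropT₃Approx (G : Type*) [Group G] [TopologicalSpace G] (H M : Set G) : Prop :=
  ∀ δ : ℝ, 0 < δ → ∃ Q : Set G, Q ⊆ H ∧ IsCompact Q ∧ ∃ ε : ℝ, 0 < ε ∧
    ∀ (𝓗 : Type) (_ : NormedAddCommGroup 𝓗) (_ : InnerProductSpace ℂ 𝓗)
      (_ : CompleteSpace 𝓗) (_ : SecondCountableTopology 𝓗)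
      (π : G →* (𝓗 ≃ₗᵢ[ℂ] 𝓗)), IsUnitaryRep π → ∀ ξ : 𝓗, IsInvVec π Q ε ξ →
      ∃ η : 𝓗, (∀ m ∈ M, π m η = η) ∧ ‖ξ - η‖ ≤ δ * ‖ξ‖

/-- The closure of the commutator subgroup of a subgroup `N` of `G`, as a subgroup of `G`:
this is `N⁽¹⁾`. -/
def Subgroup.commClosure {G : Type*} [Group G] [TopologicalSpace G] [IsTopologicalGroup G]
    (N : Subgroup G) : Subgroup G :=
  (⁅N, N⁆ : Subgroup G).topologicalClosure

instance {G : Type*} [Group G] [TopologicalSpace G] [IsTopologicalGroup G]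
    (N : Subgroup G) [N.Normal] : N.commClosure.Normal :=
  Subgroup.is_normal_topologicalClosure _

instance commClosNormal {G : Type*} [Group G] [TopologicalSpace G] [IsTopologicalGroup G] :
    (commutator G).topologicalClosure.Normal :=
  Subgroup.is_normal_topologicalClosure _

/-!
Write `Ḡₙ` for the closure of the `n`-th term `γₙ` of the lower central series. By downward
induction on `n` we show `Ḡₙ ⊆ C * L₁ ⋯ Lₖ` with `C` compact and `Lᵢ ∈ 𝓛`; at the nilpotency
class `Ḡₙ = closure {1}` is compact, and `Ḡ₀ = H`.

In the induction step, `Ḡₙ` is abelian modulo the closed normal subgroup `Ḡₙ₊₁`, and compactly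
generated modulo it by iterated commutators of a compact generating set of `H`. If subgroups
`Mᵢ ≤ Ḡₙ` generate a dense subgroup of `Ḡₙ`, the compact generating set is covered by finitely
many translates `W * p` with `W` compact and `p ∈ ⟨⋃ Mᵢ⟩`; as products can be sorted modulo
`Ḡₙ₊₁`, the set `W * M₁ ⋯ Mₖ * Ḡₙ₊₁` is stable under right multiplication by the generators, so
it contains `Ḡₙ`. We take for the `Mᵢ` the subgroup `Ḡₙ₊₁` and the subgroups
`[L, x₁, …, xₙ] * γₙ₊₁` with `L ∈ 𝓛` and `xⱼ ∈ ⋃ 𝓛`: these are subgroups because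
`y ↦ [y, x₁, …, xₙ]` is a homomorphism modulo `γₙ₊₁`, and each lies in a product of members of
`𝓛` times `γₙ₊₁`. Finally `Ḡₙ₊₁` is normal, so it moves to the left of the `Lᵢ`, where the
induction hypothesis replaces it by `C * L₁ ⋯ Lₖ`.
-/

open scoped commutatorElement

section

variable {H : Type*} [Group H]

local notation "γ" => Subgroup.lowerCentralSeries (⊤ : Subgroup H)

section ProdBounded

theorem Subgroup.one_mem_list_prod_coe (ls : List (Subgroup H)) :
    (1 : H) ∈ (ls.map ((↑) : Subgroup H → Set H)).prod := by
  induction ls with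
  | nil => exact Set.mem_one.2 rfl
  | cons L ls ih => simpa using Set.mul_mem_mul L.one_mem ih

theorem Subgroup.list_prod_coe_subset {G : Subgroup H} {ls : List (Subgroup H)}
    (hls : ∀ L ∈ ls, L ≤ G) : (ls.map ((↑) : Subgroup H → Set H)).prod ⊆ G := by
  induction ls with
  | nil => simp
  | cons L ls ih =>
    simp only [List.mem_cons, forall_eq_or_imp] at hls
    simpa using (Set.mul_subset_mul (hls.1 : (L : Set H) ⊆ G) (ih hls.2)).trans
      (coe_mul_coe G).subset

theorem Subgroup.list_prod_coe_inv (ls : List (Subgroup H)) :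
    (ls.map ((↑) : Subgroup H → Set H)).prod⁻¹ =
      (ls.reverse.map ((↑) : Subgroup H → Set H)).prod := by
  induction ls with
  | nil => simp
  | cons L ls ih => simp [mul_inv_rev, ih]

def IsProdBounded (𝓛 : Set (Subgroup H)) (S : Set H) : Prop :=
  ∃ ls : List (Subgroup H), (∀ L ∈ ls, L ∈ 𝓛) ∧ S ⊆ (ls.map ((↑) : Subgroup H → Set H)).prod

namespace IsProdBounded

variable {𝓛 𝓜 : Set (Subgroup H)} {S T : Set H}

theorem mono (hST : S ⊆ T) (hT : IsProdBounded 𝓛 T) : IsProdBounded 𝓛 S :=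
  let ⟨ls, hls, hT⟩ := hT
  ⟨ls, hls, hST.trans hT⟩

theorem mono_family (h𝓛𝓜 : 𝓛 ⊆ 𝓜) (hS : IsProdBounded 𝓛 S) : IsProdBounded 𝓜 S :=
  let ⟨ls, hls, hS⟩ := hS
  ⟨ls, fun L hL => h𝓛𝓜 (hls L hL), hS⟩

theorem one : IsProdBounded 𝓛 1 := ⟨[], by simp, by simp⟩

theorem of_mem {L : Subgroup H} (hL : L ∈ 𝓛) : IsProdBounded 𝓛 L :=
  ⟨[L], by simpa using hL, by simp⟩

theorem mul (hS : IsProdBounded 𝓛 S) (hT : IsProdBounded 𝓛 T) : IsProdBounded 𝓛 (S * T) := by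
  obtain ⟨ls, hls, hS⟩ := hS
  obtain ⟨ms, hms, hT⟩ := hT
  refine ⟨ls ++ ms, fun L hL => ?_, by simpa using Set.mul_subset_mul hS hT⟩
  exact (List.mem_append.1 hL).elim (hls L) (hms L)

theorem inv (hS : IsProdBounded 𝓛 S) : IsProdBounded 𝓛 S⁻¹ := by
  obtain ⟨ls, hls, hS⟩ := hS
  exact ⟨ls.reverse, by simpa using hls, by
    rw [← Subgroup.list_prod_coe_inv]; exact Set.inv_subset_inv.2 hS⟩

theorem union (hS : IsProdBounded 𝓛 S) (hT : IsProdBounded 𝓛 T) :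
    IsProdBounded 𝓛 (S ∪ T) := by
  obtain ⟨ls, hls, hS⟩ := hS
  obtain ⟨ms, hms, hT⟩ := hT
  refine (mul ⟨ls, hls, subset_rfl⟩ ⟨ms, hms, subset_rfl⟩).mono (Set.union_subset ?_ ?_)
  · exact fun x hx => ⟨x, hS hx, 1, Subgroup.one_mem_list_prod_coe ms, mul_one x⟩
  · exact fun x hx => ⟨1, Subgroup.one_mem_list_prod_coe ls, x, hT hx, one_mul x⟩

theorem singleton_of_mem_closure {x : H}
    (hx : x ∈ Subgroup.closure (⋃ L ∈ 𝓛, (L : Set H))) : IsProdBounded 𝓛 {x} := by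
  induction hx using Subgroup.closure_induction with
  | mem x hx =>
    obtain ⟨L, hL, hxL⟩ := Set.mem_iUnion₂.1 hx
    exact (of_mem hL).mono (Set.singleton_subset_iff.2 hxL)
  | one => exact one
  | mul x y _ _ hx hy => exact (hx.mul hy).mono (by simp)
  | inv x _ hx => exact hx.inv.mono (by simp)

theorem of_finite {F : Set H} (hF : F.Finite)
    (hF𝓛 : F ⊆ Subgroup.closure (⋃ L ∈ 𝓛, (L : Set H))) : IsProdBounded 𝓛 F := by
  induction F, hF using Set.Finite.induction_on with
  | empty => exact one.mono (Set.empty_subset _)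
  | insert _ _ ih =>
    rw [Set.insert_eq]
    exact (singleton_of_mem_closure (hF𝓛 (Set.mem_insert _ _))).union
      (ih ((Set.subset_insert _ _).trans hF𝓛))

theorem list_prod (h𝓜 : ∀ M ∈ 𝓜, IsProdBounded 𝓛 M) {ms : List (Subgroup H)}
    (hms : ∀ M ∈ ms, M ∈ 𝓜) : IsProdBounded 𝓛 (ms.map ((↑) : Subgroup H → Set H)).prod := by
  induction ms with
  | nil => exact one
  | cons M ms ih =>
    simp only [List.mem_cons, forall_eq_or_imp] at hms
    simpa using (h𝓜 M hms.1).mul (ih hms.2)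

theorem trans (h𝓜 : ∀ M ∈ 𝓜, IsProdBounded 𝓛 M) (hS : IsProdBounded 𝓜 S) :
    IsProdBounded 𝓛 S :=
  let ⟨_, hms, hS⟩ := hS
  (list_prod h𝓜 hms).mono hS

theorem exists_subset_normal_mul {N : Subgroup H} [N.Normal]
    (hS : IsProdBounded (insert N 𝓛) S) : ∃ P, IsProdBounded 𝓛 P ∧ S ⊆ N * P := by
  obtain ⟨ls, hls, hS⟩ := hS
  induction ls generalizing S with
  | nil => exact ⟨1, one, hS.trans (by simp)⟩
  | cons L ls ih =>
    simp only [List.mem_cons, forall_eq_or_imp, Set.mem_insert_iff] at hls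
    obtain ⟨P, hP, hsub⟩ := ih hls.2 subset_rfl
    rw [List.map_cons, List.prod_cons] at hS
    rcases hls.1 with rfl | hL
    · refine ⟨P, hP, hS.trans ?_⟩
      calc (L : Set H) * (ls.map ((↑) : Subgroup H → Set H)).prod ⊆ L * (L * P) :=
            Set.mul_subset_mul_left hsub
        _ = L * P := by rw [← mul_assoc, coe_mul_coe]
    · refine ⟨L * P, (of_mem hL).mul hP, hS.trans ?_⟩
      calc (L : Set H) * (ls.map ((↑) : Subgroup H → Set H)).prod ⊆ L * (N * P) :=
            Set.mul_subset_mul_left hsub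
        _ = N * (L * P) := by rw [← mul_assoc, Subgroup.set_mul_normal_comm, mul_assoc]

end IsProdBounded

end ProdBounded

section Abelian

variable {G N : Subgroup H}

theorem mul_subset_mul_mul_of_commutator_le (hGN : ⁅G, G⁆ ≤ N) {A B : Set H}
    (hA : A ⊆ G) (hB : B ⊆ G) : A * B ⊆ B * A * N := by
  rintro _ ⟨a, ha, b, hb, rfl⟩
  refine ⟨b * a, Set.mul_mem_mul hb ha, ⁅a⁻¹, b⁻¹⁆,
    hGN (Subgroup.commutator_mem_commutator (inv_mem (hA ha)) (inv_mem (hB hb))), ?_⟩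
  group

theorem list_prod_mul_normal_mul_self_subset [N.Normal] (hGN : ⁅G, G⁆ ≤ N)
    {ms : List (Subgroup H)} (hms : ∀ M ∈ ms, M ≤ G) :
    (ms.map ((↑) : Subgroup H → Set H)).prod * N * ((ms.map ((↑) : Subgroup H → Set H)).prod * N)
      ⊆ (ms.map ((↑) : Subgroup H → Set H)).prod * N := by
  induction ms with
  | nil => simp
  | cons M ms ih =>
    simp only [List.mem_cons, forall_eq_or_imp] at hms
    set P := (ms.map ((↑) : Subgroup H → Set H)).prod
    have hswap : P * N * M ⊆ M * (P * N) := by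
      calc P * N * M = P * M * N := by
            rw [mul_assoc, ← Subgroup.set_mul_normal_comm, mul_assoc]
        _ ⊆ M * P * N * N := Set.mul_subset_mul_right
            (mul_subset_mul_mul_of_commutator_le hGN (Subgroup.list_prod_coe_subset hms.2) hms.1)
        _ = M * (P * N) := by rw [mul_assoc _ (N : Set H), coe_mul_coe, mul_assoc]
    simp only [List.map_cons, List.prod_cons]
    calc M * P * N * (M * P * N) = M * (P * N * M) * (P * N) := by simp only [mul_assoc]
      _ ⊆ M * (M * (P * N)) * (P * N) := by gcongr
      _ = M * (P * N * (P * N)) := by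
          rw [← mul_assoc (M : Set H), coe_mul_coe]; simp only [mul_assoc]
      _ ⊆ M * (P * N) := Set.mul_subset_mul_left (ih hms.2)
      _ = M * P * N := by simp only [mul_assoc]

theorem mul_mul_union_subset_of_commutator_le (hGN : ⁅G, G⁆ ≤ N) {W V P : Set H}
    (hVG : V ⊆ G) (hPG : P ⊆ G) (hPP : P * P ⊆ P) (hPN : P * N = P) (hWV : W * V ⊆ W * P) :
    W * P * (V ∪ N) ⊆ W * P := by
  rw [Set.mul_union]
  refine Set.union_subset ?_ (by rw [mul_assoc, hPN])
  calc W * P * V = W * (P * V) := mul_assoc _ _ _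
    _ ⊆ W * (V * P * N) :=
        Set.mul_subset_mul_left (mul_subset_mul_mul_of_commutator_le hGN hPG hVG)
    _ = W * V * P := by rw [mul_assoc V, hPN, mul_assoc]
    _ ⊆ W * P * P := Set.mul_subset_mul_right hWV
    _ ⊆ W * P := by rw [mul_assoc]; exact Set.mul_subset_mul_left hPP

end Abelian

theorem Subgroup.closure_subset_of_mul_subset {T Y : Set H} (hT : (1 : H) ∈ T)
    (hY : T * Y ⊆ T) (hY' : T * Y⁻¹ ⊆ T) : (Subgroup.closure Y : Set H) ⊆ T := by
  suffices ∀ g ∈ Subgroup.closure Y, ∀ x ∈ T, x * g ∈ T from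
    fun g hg => by simpa using this g hg 1 hT
  intro g hg
  induction hg using Subgroup.closure_induction'' with
  | mem y hy => exact fun x hx => hY (Set.mul_mem_mul hx hy)
  | inv_mem y hy => exact fun x hx => hY' (Set.mul_mem_mul hx (Set.inv_mem_inv.2 hy))
  | one => simp
  | mul g h _ _ hg hh => exact fun x hx => by simpa [mul_assoc] using hh _ (hg x hx)

section Commutator

open Subgroup

theorem Subgroup.commutator_mem_of_mem_closure_right {K : Subgroup H} {S Y : Set H}
    (hYK : closure Y ≤ normalizer (K : Set H)) (h : ∀ s ∈ S, ∀ y ∈ Y, ⁅s, y⁆ ∈ K) :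
    ∀ s ∈ S, ∀ y ∈ closure Y, ⁅s, y⁆ ∈ K := by
  intro s hs y hy
  induction hy using closure_induction with
  | mem y hy => exact h s hs y hy
  | one => simp [commutatorElement_one_right]
  | mul y z hy _ ihy ihz =>
    rw [commutatorElement_mul_right_eq_mul_conj, mul_assoc _ y, mul_assoc]
    exact mul_mem ihy ((mem_normalizer_iff.1 (hYK hy) _).1 ihz)
  | inv y hy ihy =>
    rw [commutatorElement_inv_right, ← commutatorElement_inv]
    simpa using (mem_normalizer_iff.1 (hYK (inv_mem hy)) _).1 (inv_mem ihy)

theorem Subgroup.commutator_closure_le {K : Subgroup H} {S Y : Set H}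
    (hSK : closure S ≤ normalizer (K : Set H)) (hYK : closure Y ≤ normalizer (K : Set H))
    (h : ∀ s ∈ S, ∀ y ∈ Y, ⁅s, y⁆ ∈ K) : ⁅closure S, closure Y⁆ ≤ K := by
  have h' : ∀ y ∈ closure Y, ∀ s ∈ S, ⁅y, s⁆ ∈ K := fun y hy s hs => by
    simpa [commutatorElement_inv] using
      inv_mem (commutator_mem_of_mem_closure_right hYK h s hs y hy)
  refine commutator_le.2 fun a ha y hy => ?_
  simpa [commutatorElement_inv] using
    inv_mem (commutator_mem_of_mem_closure_right hSK h' y hy a ha)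

def iteratedCommutatorSet (X : Set H) : ℕ → Set H
  | 0 => X
  | n + 1 => Set.image2 (fun a x => ⁅a, x⁆) (iteratedCommutatorSet X n) X

theorem iteratedCommutatorSet_subset_lowerCentralSeries (X : Set H) (n : ℕ) :
    iteratedCommutatorSet X n ⊆ (closure X).lowerCentralSeries n := by
  induction n with
  | zero => exact subset_closure
  | succ n ih =>
    rintro _ ⟨a, ha, x, hx, rfl⟩
    exact commutator_mem_commutator (ih ha) (subset_closure hx)

theorem Subgroup.lowerCentralSeries_closure_le (X : Set H) (n : ℕ) :
    (closure X).lowerCentralSeries n ≤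
      closure (iteratedCommutatorSet X n) ⊔ (closure X).lowerCentralSeries (n + 1) := by
  set D := closure X
  induction n with
  | zero => exact le_sup_of_le_left le_rfl
  | succ n ih =>
    set T := closure (iteratedCommutatorSet X (n + 1)) ⊔ D.lowerCentralSeries (n + 2)
    have hT : T = closure (iteratedCommutatorSet X (n + 1) ∪ D.lowerCentralSeries (n + 2)) := by
      rw [closure_union, closure_eq]
    have hDT : D ≤ normalizer (T : Set H) := by
      rw [hT, le_normalizer_closure_iff, ← hT]
      rintro a ha g (hg | hg)
      · have hg' := iteratedCommutatorSet_subset_lowerCentralSeries X (n + 1) hg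
        rw [show a * g * a⁻¹ = ⁅a, g⁆ * g by group, ← commutatorElement_inv]
        exact mul_mem (mem_sup_right (inv_mem (commutator_mem_commutator hg' ha)))
          (mem_sup_left (subset_closure hg))
      · exact mem_sup_right ((mem_normalizer_iff.1
          (D.self_le_normalizer_lowerCentralSeries (n + 2) ha) g).1 hg)
    have hgen : D.lowerCentralSeries n ≤
        closure (iteratedCommutatorSet X n ∪ D.lowerCentralSeries (n + 1)) := by
      rwa [closure_union, closure_eq]
    have hgenD : closure (iteratedCommutatorSet X n ∪ D.lowerCentralSeries (n + 1)) ≤ D :=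
      (closure_le D).2 (Set.union_subset
        ((iteratedCommutatorSet_subset_lowerCentralSeries X n).trans
          (D.lowerCentralSeries_le_self n)) (D.lowerCentralSeries_le_self (n + 1)))
    refine (commutator_mono hgen le_rfl).trans (commutator_closure_le (hgenD.trans hDT) hDT ?_)
    rintro s (hs | hs) y hy
    · exact mem_sup_left (subset_closure ⟨s, hs, y, hy, rfl⟩)
    · exact mem_sup_right (commutator_mem_commutator hs (subset_closure hy))

def iteratedCommutator (y : H) (xs : List H) : H := xs.foldl (fun a x => ⁅a, x⁆) y

@[simp] theorem iteratedCommutator_nil (y : H) : iteratedCommutator y [] = y := rfl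

@[simp] theorem iteratedCommutator_cons (y x : H) (xs : List H) :
    iteratedCommutator y (x :: xs) = iteratedCommutator ⁅y, x⁆ xs := rfl

theorem iteratedCommutator_append_singleton (y x : H) (xs : List H) :
    iteratedCommutator y (xs ++ [x]) = ⁅iteratedCommutator y xs, x⁆ := by
  simp [iteratedCommutator]

theorem exists_iteratedCommutator_eq_of_mem_iteratedCommutatorSet {X : Set H} {n : ℕ} {g : H}
    (hg : g ∈ iteratedCommutatorSet X n) :
    ∃ x ∈ X, ∃ xs : List H, (∀ z ∈ xs, z ∈ X) ∧ xs.length = n ∧ iteratedCommutator x xs = g := by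
  induction n generalizing g with
  | zero => exact ⟨g, hg, [], by simp, rfl, rfl⟩
  | succ n ih =>
    obtain ⟨a, ha, y, hy, rfl⟩ := hg
    obtain ⟨x, hx, xs, hxs, rfl, rfl⟩ := ih ha
    refine ⟨x, hx, xs ++ [y], ?_, by simp, iteratedCommutator_append_singleton x y xs⟩
    simpa [or_imp, forall_and] using ⟨hxs, hy⟩

theorem iteratedCommutator_mem_lowerCentralSeries {k : ℕ} {y : H} (hy : y ∈ γ k) (xs : List H) :
    iteratedCommutator y xs ∈ γ (k + xs.length) := by
  induction xs generalizing k y with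
  | nil => exact hy
  | cons x xs ih =>
    rw [List.length_cons, ← add_assoc, add_right_comm]
    exact ih (commutator_mem_commutator hy (mem_top x))

theorem QuotientGroup.mk_lowerCentralSeries_eq_one {m j : ℕ} (h : m ≤ j) {a : H} (ha : a ∈ γ j) :
    (a : H ⧸ γ m) = 1 :=
  (QuotientGroup.eq_one_iff a).2 ((⊤ : Subgroup H).lowerCentralSeries_antitone h ha)

theorem QuotientGroup.mk_lowerCentralSeries_mul_comm {m j : ℕ} (h : m ≤ j + 1) {a : H}
    (ha : a ∈ γ j) (b : H) : (a : H ⧸ γ m) * b = b * a := by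
  have hab : ((⁅a⁻¹, b⁻¹⁆ : H) : H ⧸ γ m) = 1 :=
    mk_lowerCentralSeries_eq_one h (commutator_mem_commutator (inv_mem ha) (mem_top _))
  rw [← QuotientGroup.mk_mul, ← QuotientGroup.mk_mul, show a * b = b * a * ⁅a⁻¹, b⁻¹⁆ by group,
    QuotientGroup.mk_mul, hab, mul_one]

theorem mk_iteratedCommutator_mul (xs : List H) {k m : ℕ} (hm : m ≤ k + xs.length + 1) {y z : H}
    (hy : y ∈ γ k) (hz : z ∈ γ k) :
    ((iteratedCommutator (y * z) xs : H) : H ⧸ γ m) =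
      (iteratedCommutator y xs : H) * (iteratedCommutator z xs : H) := by
  induction xs generalizing k y z with
  | nil => rfl
  | cons x xs ih =>
    rw [List.length_cons] at hm
    have hm' : m ≤ k + 1 + xs.length + 1 := by omega
    have hu : ⁅z, x⁆ ∈ γ (k + 1) := commutator_mem_commutator hz (mem_top x)
    have hv : ⁅⁅z, x⁆⁻¹, y⁆ ∈ γ (k + 2) := commutator_mem_commutator (inv_mem hu) (mem_top y)
    have hv' := (⊤ : Subgroup H).lowerCentralSeries_antitone (Nat.le_succ (k + 1)) hv
    simp only [iteratedCommutator_cons]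
    -- the middle factor is one step deeper, and the outer two commute modulo `γ m`
    rw [show ⁅y * z, x⁆ = ⁅z, x⁆ * ⁅⁅z, x⁆⁻¹, y⁆ * ⁅y, x⁆ by group,
      ih hm' (mul_mem hu hv') (commutator_mem_commutator hy (mem_top x)), ih hm' hu hv',
      QuotientGroup.mk_lowerCentralSeries_eq_one (by omega)
        (iteratedCommutator_mem_lowerCentralSeries hv xs), mul_one,
      QuotientGroup.mk_lowerCentralSeries_mul_comm (by omega)
        (iteratedCommutator_mem_lowerCentralSeries hu xs)]

def iteratedCommutatorHom (xs : List H) : H →* H ⧸ γ (xs.length + 1) :=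
  MonoidHom.mk' (fun y => ((iteratedCommutator y xs : H) : H ⧸ γ (xs.length + 1))) fun y z =>
    mk_iteratedCommutator_mul xs (k := 0) (by omega) (mem_top y) (mem_top z)

/-- The subgroup `[L, x₁, …, xₙ] * γₙ₊₁`. -/
def iteratedCommutatorSubgroup (L : Subgroup H) (xs : List H) : Subgroup H :=
  (L.map (iteratedCommutatorHom xs)).comap (QuotientGroup.mk' _)

theorem iteratedCommutator_mem_iteratedCommutatorSubgroup {L : Subgroup H} {y : H} (hy : y ∈ L)
    (xs : List H) : iteratedCommutator y xs ∈ iteratedCommutatorSubgroup L xs :=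
  ⟨y, hy, rfl⟩

theorem iteratedCommutatorSubgroup_subset (L : Subgroup H) (xs : List H) :
    (iteratedCommutatorSubgroup L xs : Set H) ⊆
      (fun y => iteratedCommutator y xs) '' L * γ (xs.length + 1) := by
  rintro g ⟨y, hy, hyg⟩
  exact ⟨_, ⟨y, hy, rfl⟩, _, QuotientGroup.eq.1 hyg, mul_inv_cancel_left _ _⟩

theorem iteratedCommutatorSubgroup_le (L : Subgroup H) (xs : List H) :
    iteratedCommutatorSubgroup L xs ≤ γ xs.length := by
  intro g hg
  obtain ⟨_, ⟨y, -, rfl⟩, e, he, rfl⟩ := iteratedCommutatorSubgroup_subset L xs hg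
  exact mul_mem (by simpa using iteratedCommutator_mem_lowerCentralSeries (k := 0) (mem_top y) xs)
    ((⊤ : Subgroup H).lowerCentralSeries_antitone (Nat.le_succ _) he)

theorem IsProdBounded.image_iteratedCommutator {𝓛 : Set (Subgroup H)} {S : Set H}
    (hS : IsProdBounded 𝓛 S) {xs : List H} (hxs : ∀ x ∈ xs, x ∈ ⋃ L ∈ 𝓛, (L : Set H)) :
    IsProdBounded 𝓛 ((fun y => iteratedCommutator y xs) '' S) := by
  induction xs generalizing S with
  | nil => simpa using hS
  | cons x xs ih =>
    simp only [List.mem_cons, forall_eq_or_imp] at hxs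
    obtain ⟨L, hL, hxL⟩ := Set.mem_iUnion₂.1 hxs.1
    have hcomm : (fun y => ⁅y, x⁆) '' S ⊆ S * L * S⁻¹ * L := by
      rintro _ ⟨y, hy, rfl⟩
      exact ⟨_, ⟨_, ⟨y, hy, x, hxL, rfl⟩, y⁻¹, Set.inv_mem_inv.2 hy, rfl⟩, x⁻¹, inv_mem hxL, rfl⟩
    simpa [Set.image_image] using
      ih ((((hS.mul (.of_mem hL)).mul hS.inv).mul (.of_mem hL)).mono hcomm) hxs.2

def iteratedCommutatorFamily (𝓛 : Set (Subgroup H)) (n : ℕ) : Set (Subgroup H) :=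
  {M | ∃ L ∈ 𝓛, ∃ xs : List H, (∀ x ∈ xs, x ∈ ⋃ L ∈ 𝓛, (L : Set H)) ∧ xs.length = n ∧
    iteratedCommutatorSubgroup L xs = M}

theorem iteratedCommutatorSet_subset_iUnion_iteratedCommutatorFamily
    (𝓛 : Set (Subgroup H)) (n : ℕ) :
    iteratedCommutatorSet (⋃ L ∈ 𝓛, (L : Set H)) n ⊆
      ⋃ M ∈ iteratedCommutatorFamily 𝓛 n, (M : Set H) := by
  intro g hg
  obtain ⟨x, hx, xs, hxs, hlen, rfl⟩ :=
    exists_iteratedCommutator_eq_of_mem_iteratedCommutatorSet hg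
  obtain ⟨L, hL, hxL⟩ := Set.mem_iUnion₂.1 hx
  exact Set.mem_iUnion₂.2 ⟨_, ⟨L, hL, xs, hxs, hlen, rfl⟩,
    iteratedCommutator_mem_iteratedCommutatorSubgroup hxL xs⟩

theorem le_lowerCentralSeries_of_mem_iteratedCommutatorFamily {𝓛 : Set (Subgroup H)} {n : ℕ}
    {M : Subgroup H} (hM : M ∈ iteratedCommutatorFamily 𝓛 n) : M ≤ γ n := by
  obtain ⟨L, -, xs, -, rfl, rfl⟩ := hM
  exact iteratedCommutatorSubgroup_le L xs

theorem isProdBounded_insert_of_mem_iteratedCommutatorFamily {𝓛 : Set (Subgroup H)} {n : ℕ}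
    {M : Subgroup H} (hM : M ∈ iteratedCommutatorFamily 𝓛 n) {N : Subgroup H}
    (hN : γ (n + 1) ≤ N) : IsProdBounded (insert N 𝓛) M := by
  obtain ⟨L, hL, xs, hxs, rfl, rfl⟩ := hM
  refine (IsProdBounded.mul ?_ (.of_mem (Set.mem_insert N 𝓛))).mono
    ((iteratedCommutatorSubgroup_subset L xs).trans (Set.mul_subset_mul_left hN))
  exact ((IsProdBounded.of_mem hL).image_iteratedCommutator hxs).mono_family
    (Set.subset_insert N 𝓛)

end Commutator

section Topology

open Topology

variable [TopologicalSpace H] [IsTopologicalGroup H]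

theorem IsCompact.exists_finite_subset_mul_of_subset_closure {G D : Subgroup H} (hDG : D ≤ G)
    {K : Set H} (hK : K ∈ 𝓝 (1 : H)) {S : Set H} (hS : IsCompact S) (hSG : S ⊆ G)
    (hSD : S ⊆ closure (D : Set H)) :
    ∃ F ⊆ (D : Set H), F.Finite ∧ S ⊆ ((G : Set H) ∩ K) * F := by
  have hopen (d : H) : IsOpen {z | z * d⁻¹ ∈ interior K} :=
    isOpen_interior.preimage (continuous_mul_const d⁻¹)
  have hcover : S ⊆ ⋃ d ∈ (D : Set H), {z | z * d⁻¹ ∈ interior K} := by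
    intro s hs
    have hs' : s ∈ {d | s * d⁻¹ ∈ interior K} := by
      simpa using mem_interior_iff_mem_nhds.2 hK
    obtain ⟨d, hsd, hd⟩ := mem_closure_iff.1 (hSD hs) _
      (isOpen_interior.preimage (continuous_const.mul continuous_inv)) hs'
    exact Set.mem_biUnion hd hsd
  obtain ⟨F, hFD, hF, hSF⟩ := hS.elim_finite_subcover_image (fun d _ => hopen d) hcover
  refine ⟨F, hFD, hF, fun s hs => ?_⟩
  obtain ⟨d, hdF, hsd⟩ := Set.mem_iUnion₂.1 (hSF hs)
  exact ⟨s * d⁻¹, ⟨mul_mem (hSG hs) (inv_mem (hDG (hFD hdF))), interior_subset hsd⟩, d, hdF,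
    by group⟩

theorem le_closure_inter_sup_of_le_topologicalClosure {G D : Subgroup H} (hDG : D ≤ G)
    (hGD : G ≤ D.topologicalClosure) {K : Set H} (hK : K ∈ 𝓝 (1 : H)) :
    G ≤ Subgroup.closure ((G : Set H) ∩ K) ⊔ D := by
  intro g hg
  obtain ⟨F, hFD, -, hgF⟩ := isCompact_singleton.exists_finite_subset_mul_of_subset_closure hDG hK
    (Set.singleton_subset_iff.2 hg) (Set.singleton_subset_iff.2 (hGD hg))
  obtain ⟨w, hw, d, hd, rfl⟩ := hgF rfl
  exact mul_mem (Subgroup.mem_sup_left (Subgroup.subset_closure hw))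
    (Subgroup.mem_sup_right (hFD hd))

theorem exists_isCompact_subset_mul_of_commutator_le [LocallyCompactSpace H]
    {G N : Subgroup H} [N.Normal] (hG : IsClosed (G : Set H)) (hNG : N ≤ G) (hGN : ⁅G, G⁆ ≤ N)
    {R : Set H} (hR : IsCompact R) (hRG : R ⊆ G)
    (hGR : G ≤ (Subgroup.closure R ⊔ N).topologicalClosure)
    {𝓜 : Set (Subgroup H)} (hN𝓜 : N ∈ 𝓜) (h𝓜G : ∀ M ∈ 𝓜, M ≤ G)
    (hG𝓜 : G ≤ (Subgroup.closure (⋃ M ∈ 𝓜, (M : Set H))).topologicalClosure) :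
    ∃ W, IsCompact W ∧ ∃ P, IsProdBounded 𝓜 P ∧ (G : Set H) ⊆ W * P := by
  obtain ⟨K, hKc, hK⟩ := exists_compact_mem_nhds (1 : H)
  set W := (G : Set H) ∩ K
  have hWG : W ⊆ G := Set.inter_subset_left
  have hWc : IsCompact W := hKc.inter_left hG
  set V := (R ∪ W) ∪ (R ∪ W)⁻¹
  have hVG : V ⊆ G := by
    refine Set.union_subset (Set.union_subset hRG hWG) ?_
    rw [Set.inv_subset, inv_coe_set]
    exact Set.union_subset hRG hWG
  have hWVG : W * V ⊆ G := (Set.mul_subset_mul hWG hVG).trans (coe_mul_coe G).subset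
  obtain ⟨F, hFD, hF, hWVF⟩ :=
    (hWc.mul ((hR.union hWc).union (hR.union hWc).inv)).exists_finite_subset_mul_of_subset_closure
      ((Subgroup.closure_le G).2 (Set.iUnion₂_subset h𝓜G)) hK hWVG (hWVG.trans hG𝓜)
  obtain ⟨ms, hms, hFP⟩ := IsProdBounded.of_finite hF hFD
  have hmsG : ∀ M ∈ ms, M ≤ G := fun M hM => h𝓜G M (hms M hM)
  set P := (ms.map ((↑) : Subgroup H → Set H)).prod * N
  have hPG : P ⊆ G := (Set.mul_subset_mul (Subgroup.list_prod_coe_subset hmsG) hNG).trans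
    (coe_mul_coe G).subset
  -- `W * P` is stable under right multiplication by `V` and by `N`, which generate `G`.
  have hstable : W * P * (V ∪ N) ⊆ W * P :=
    mul_mul_union_subset_of_commutator_le hGN hVG hPG
      (list_prod_mul_normal_mul_self_subset hGN hmsG) (by rw [mul_assoc, coe_mul_coe])
      (hWVF.trans (Set.mul_subset_mul_left (hFP.trans (Set.subset_mul_left _ N.one_mem))))
  have hgen : G ≤ Subgroup.closure (R ∪ W ∪ N) := by
    simpa only [Subgroup.closure_union, Subgroup.closure_eq, sup_comm, sup_assoc] using
      le_closure_inter_sup_of_le_topologicalClosure (sup_le ((Subgroup.closure_le G).2 hRG) hNG)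
        hGR hK
  have h1 : (1 : H) ∈ W * P := ⟨1, ⟨G.one_mem, mem_of_mem_nhds hK⟩, 1,
    ⟨1, Subgroup.one_mem_list_prod_coe ms, 1, N.one_mem, mul_one 1⟩, mul_one 1⟩
  refine ⟨W, hWc, P, (IsProdBounded.mul ⟨ms, hms, subset_rfl⟩ (.of_mem hN𝓜)),
    (SetLike.coe_subset_coe.2 hgen).trans (Subgroup.closure_subset_of_mul_subset h1
      (subset_trans ?_ hstable) (subset_trans ?_ hstable))⟩
  · exact Set.mul_subset_mul_left (Set.union_subset_union_left _ Set.subset_union_left)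
  · rw [Set.union_inv, inv_coe_set]
    exact Set.mul_subset_mul_left (Set.union_subset_union_left _ Set.subset_union_right)

theorem IsCompact.iteratedCommutatorSet {Q : Set H} (hQ : IsCompact Q) (n : ℕ) :
    IsCompact (iteratedCommutatorSet Q n) := by
  induction n with
  | zero => exact hQ
  | succ n ih =>
    rw [_root_.iteratedCommutatorSet, ← Set.image_prod]
    exact (ih.prod hQ).image (by simp only [commutatorElement_def]; fun_prop)

theorem Subgroup.commutator_topologicalClosure_le (A B : Subgroup H) :
    ⁅A.topologicalClosure, B.topologicalClosure⁆ ≤ ⁅A, B⁆.topologicalClosure :=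
  Subgroup.commutator_le.2 fun _ ha _ hb =>
    map_mem_closure₂ (f := fun a b : H => ⁅a, b⁆) (u := ((⁅A, B⁆ : Subgroup H) : Set H))
      (by simp only [commutatorElement_def]; fun_prop) ha hb
      fun _ ha _ hb => Subgroup.commutator_mem_commutator ha hb

theorem lowerCentralSeries_le_topologicalClosure {D : Subgroup H} (hD : Dense (D : Set H))
    (n : ℕ) : γ n ≤ (D.lowerCentralSeries n).topologicalClosure := by
  have hD' : ⊤ ≤ D.topologicalClosure := fun x _ => by
    rw [← SetLike.mem_coe, Subgroup.topologicalClosure_coe, hD.closure_eq]; trivial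
  induction n with
  | zero => exact hD'
  | succ n ih =>
    exact (Subgroup.commutator_mono ih hD').trans (Subgroup.commutator_topologicalClosure_le _ _)

variable (H) in
def closedLowerCentralSeries (n : ℕ) : Subgroup H :=
  (γ n).topologicalClosure

instance (n : ℕ) : (closedLowerCentralSeries H n).Normal :=
  Subgroup.is_normal_topologicalClosure _

theorem isClosed_closedLowerCentralSeries (n : ℕ) :
    IsClosed (closedLowerCentralSeries H n : Set H) :=
  Subgroup.isClosed_topologicalClosure _

theorem lowerCentralSeries_le_closedLowerCentralSeries (n : ℕ) :
    γ n ≤ closedLowerCentralSeries H n :=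
  Subgroup.le_topologicalClosure _

theorem closedLowerCentralSeries_antitone : Antitone (closedLowerCentralSeries H) :=
  fun _ _ h => Subgroup.topologicalClosure_mono ((⊤ : Subgroup H).lowerCentralSeries_antitone h)

theorem closedLowerCentralSeries_zero : closedLowerCentralSeries H 0 = ⊤ :=
  eq_top_iff.2 (Subgroup.le_topologicalClosure ⊤)

theorem coe_closedLowerCentralSeries_of_eq_bot {n : ℕ} (h : γ n = ⊥) :
    (closedLowerCentralSeries H n : Set H) = closure {1} := by
  rw [closedLowerCentralSeries, h, Subgroup.coe_topologicalClosure_bot]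

theorem commutator_closedLowerCentralSeries_le (n : ℕ) :
    ⁅closedLowerCentralSeries H n, closedLowerCentralSeries H n⁆ ≤
      closedLowerCentralSeries H (n + 1) :=
  (Subgroup.commutator_mono le_rfl (le_top.trans (Subgroup.le_topologicalClosure ⊤))).trans
    (Subgroup.commutator_topologicalClosure_le _ _)

theorem closedLowerCentralSeries_le {X : Set H} (hX : Dense (Subgroup.closure X : Set H))
    (n : ℕ) : closedLowerCentralSeries H n ≤ (Subgroup.closure (iteratedCommutatorSet X n) ⊔
      closedLowerCentralSeries H (n + 1)).topologicalClosure := by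
  refine Subgroup.topologicalClosure_minimal _
    ((lowerCentralSeries_le_topologicalClosure hX n).trans (Subgroup.topologicalClosure_mono
      ((Subgroup.lowerCentralSeries_closure_le X n).trans ?_)))
    (Subgroup.isClosed_topologicalClosure _)
  exact sup_le_sup_left ((Subgroup.lowerCentralSeries_mono (n + 1) le_top).trans
    (lowerCentralSeries_le_closedLowerCentralSeries _)) _

theorem closedLowerCentralSeries_le_closure_iteratedCommutatorFamily {𝓛 : Set (Subgroup H)}
    (h𝓛 : Dense (Subgroup.closure (⋃ L ∈ 𝓛, (L : Set H)) : Set H)) (n : ℕ) :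
    closedLowerCentralSeries H n ≤ (Subgroup.closure (⋃ M ∈ insert
      (closedLowerCentralSeries H (n + 1)) (iteratedCommutatorFamily 𝓛 n), (M : Set H))
      ).topologicalClosure := by
  refine (closedLowerCentralSeries_le h𝓛 n).trans
    (Subgroup.topologicalClosure_mono (sup_le (Subgroup.closure_mono ?_) fun x hx => ?_))
  · exact (iteratedCommutatorSet_subset_iUnion_iteratedCommutatorFamily 𝓛 n).trans
      (Set.biUnion_subset_biUnion_left (Set.subset_insert _ _))
  · exact Subgroup.subset_closure (Set.mem_biUnion (Set.mem_insert _ _) hx)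

theorem exists_isCompact_closedLowerCentralSeries_subset_mul [LocallyCompactSpace H]
    {Q : Set H} (hQ : IsCompact Q) (hQH : Subgroup.closure Q = ⊤) {𝓛 : Set (Subgroup H)}
    (h𝓛 : Dense (Subgroup.closure (⋃ L ∈ 𝓛, (L : Set H)) : Set H)) {n : ℕ}
    (hsucc : ∃ C, IsCompact C ∧ ∃ P, IsProdBounded 𝓛 P ∧
      (closedLowerCentralSeries H (n + 1) : Set H) ⊆ C * P) :
    ∃ C, IsCompact C ∧ ∃ P, IsProdBounded 𝓛 P ∧
      (closedLowerCentralSeries H n : Set H) ⊆ C * P := by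
  set N := closedLowerCentralSeries H (n + 1)
  have hNG : N ≤ closedLowerCentralSeries H n := closedLowerCentralSeries_antitone n.le_succ
  have hRG : iteratedCommutatorSet Q n ⊆ closedLowerCentralSeries H n := by
    have hR := iteratedCommutatorSet_subset_lowerCentralSeries Q n
    rw [hQH] at hR
    exact hR.trans (lowerCentralSeries_le_closedLowerCentralSeries n)
  have h𝓜G : ∀ M ∈ insert N (iteratedCommutatorFamily 𝓛 n),
      M ≤ closedLowerCentralSeries H n := by
    rintro M (rfl | hM)
    exacts [hNG, (le_lowerCentralSeries_of_mem_iteratedCommutatorFamily hM).trans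
      (lowerCentralSeries_le_closedLowerCentralSeries n)]
  have h𝓜 : ∀ M ∈ insert N (iteratedCommutatorFamily 𝓛 n), IsProdBounded (insert N 𝓛) M := by
    rintro M (rfl | hM)
    exacts [.of_mem (Set.mem_insert _ _), isProdBounded_insert_of_mem_iteratedCommutatorFamily hM
      (lowerCentralSeries_le_closedLowerCentralSeries _)]
  obtain ⟨W, hW, P, hP, hGP⟩ := exists_isCompact_subset_mul_of_commutator_le
    (isClosed_closedLowerCentralSeries n) hNG (commutator_closedLowerCentralSeries_le n)
    (hQ.iteratedCommutatorSet n) hRG (closedLowerCentralSeries_le (by simp [hQH]) n)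
    (Set.mem_insert N _) h𝓜G (closedLowerCentralSeries_le_closure_iteratedCommutatorFamily h𝓛 n)
  obtain ⟨P', hP', hPP'⟩ := (hP.trans h𝓜).exists_subset_normal_mul
  obtain ⟨C, hC, P'', hP'', hNC⟩ := hsucc
  refine ⟨W * C, hW.mul hC, P'' * P', hP''.mul hP', ?_⟩
  calc (closedLowerCentralSeries H n : Set H) ⊆ W * (N * P') :=
        hGP.trans (Set.mul_subset_mul_left hPP')
    _ ⊆ W * (C * P'' * P') := Set.mul_subset_mul_left (Set.mul_subset_mul_right hNC)
    _ = W * C * (P'' * P') := by simp only [mul_assoc]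

end Topology

end

theorem eq_compact_mul_finite_prod_of_dense_closure_general
    {H : Type*} [Group H] [TopologicalSpace H] [IsTopologicalGroup H]
    [LocallyCompactSpace H] [Group.IsNilpotent H]
    (hcg : ∃ C : Set H, IsCompact C ∧ Subgroup.closure C = ⊤)
    (𝓛 : Set (Subgroup H))
    (hdense : Dense ((Subgroup.closure (⋃ L ∈ 𝓛, (L : Set H)) : Subgroup H) : Set H)) :
    ∃ (n : ℕ) (Ls : Fin n → Subgroup H) (C : Set H), (∀ i, Ls i ∈ 𝓛) ∧ IsCompact C ∧
      C * (List.ofFn fun i => ((Ls i : Subgroup H) : Set H)).prod = Set.univ := by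
  obtain ⟨Q, hQ, hQH⟩ := hcg
  obtain ⟨c, hc⟩ := Subgroup.nilpotent_iff_lowerCentralSeries.1 ‹Group.IsNilpotent H›
  have hcover : ∀ n ≤ c, ∃ C, IsCompact C ∧ ∃ P, IsProdBounded 𝓛 P ∧
      (closedLowerCentralSeries H n : Set H) ⊆ C * P := by
    intro n hn
    induction hn using Nat.decreasingInduction with
    | self => exact ⟨closure {1}, isCompact_closure_singleton, 1, .one,
        by rw [coe_closedLowerCentralSeries_of_eq_bot hc, mul_one]⟩
    | of_succ n _ ih => exact exists_isCompact_closedLowerCentralSeries_subset_mul hQ hQH hdense ih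
  obtain ⟨C, hC, P, ⟨ls, hls, hP⟩, hCP⟩ := hcover 0 c.zero_le
  refine ⟨ls.length, fun i => ls[(i : ℕ)], C, fun i => hls _ (List.getElem_mem _), hC, ?_⟩
  rw [List.ofFn_getElem_eq_map]
  refine Set.eq_univ_of_univ_subset (subset_trans ?_ (Set.mul_subset_mul_left hP))
  simpa [closedLowerCentralSeries_zero] using hCP

/-- In a compactly generated, locally compact, nilpotent group `H`, if a
family `𝓛` of closed subgroups generates a dense subgroup, then `H` is a finite product
`C L₁ ⋯ Lₙ` with `C` compact and `Lᵢ ∈ 𝓛`. -/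
theorem eq_compact_mul_finite_prod_of_dense_closure
    {H : Type*} [Group H] [TopologicalSpace H] [IsTopologicalGroup H]
    [LocallyCompactSpace H] [SecondCountableTopology H] [Group.IsNilpotent H]
    (hcg : ∃ C : Set H, IsCompact C ∧ Subgroup.closure C = ⊤)
    (𝓛 : Set (Subgroup H)) (hclosed : ∀ L ∈ 𝓛, IsClosed ((L : Subgroup H) : Set H))
    (hdense : Dense ((Subgroup.closure (⋃ L ∈ 𝓛, (L : Set H)) : Subgroup H) : Set H)) :
    ∃ (n : ℕ) (Ls : Fin n → Subgroup H) (C : Set H), (∀ i, Ls i ∈ 𝓛) ∧ IsCompact C ∧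
      C * (List.ofFn fun i => ((Ls i : Subgroup H) : Set H)).prod = Set.univ :=
  eq_compact_mul_finite_prod_of_dense_closure_general hcg 𝓛 hdense
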